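/- Let E be a finite directed graph. Then Aut_{D_E}(C*(E)) is a normal subgroup of Aut(C*(E), D_E), and the quotient group Aut(C*(E), D_E) / Aut_{D_E}(C*(E)) (the Weyl group of C*(E)) is countable. -/

import Mathlib

/-!
Normality is formal. For countability: `C*(E)` is separable, being topologically generated by the
finitely many `S_e`, `P_v`, so it suffices that a `D_E`-preserving automorphism is determined on
`D_E` by the approximate values it takes on the generators. If `α`, `β` preserve `D_E` and
`‖α S_e - β S_e‖ < 1/2`, `‖α P_v - β P_v‖ < 1`, then by induction on `|μ|` (using
`P_{eμ} = S_e P_μ S_e*`) the projections `α P_μ` and `β P_μ` are at distance `< 1`; they lie in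
the commutative algebra `D_E`, and commuting projections at distance `< 1` coincide.
-/

/-- A finite directed graph. -/
structure FinDirGraph where
  V : Type
  E : Type
  [instFV : Fintype V]
  [instFE : Fintype E]
  [instDV : DecidableEq V]
  [instDE : DecidableEq E]
  r : E → V
  s : E → V

attribute [instance] FinDirGraph.instFV FinDirGraph.instFE FinDirGraph.instDV FinDirGraph.instDE

namespace FinDirGraph

variable (G : FinDirGraph)

/-- `G.IsPathFrom v l` : the list of edges `l` forms a path starting at vertex `v`. -/
def IsPathFrom : G.V → List G.E → Prop
  | _, [] => True
  | v, e :: l => G.s e = v ∧ IsPathFrom (G.r e) l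

/-- The terminal vertex of a list of edges starting at `v`. -/
def rangeFrom : G.V → List G.E → G.V
  | v, [] => v
  | _, e :: l => rangeFrom (G.r e) l

/-- A finite path in the graph `G`; vertices are the paths of length `0`. -/
structure Path where
  src : G.V
  edges : List G.E
  ok : G.IsPathFrom src edges

variable {G}

/-- The length of a path. -/
def Path.len (μ : G.Path) : ℕ := μ.edges.length

/-- The range (terminal vertex) of a path. -/
def Path.rng (μ : G.Path) : G.V := G.rangeFrom μ.src μ.edges

variable (G)

/-- `G` has no sinks: every vertex emits at least one edge. -/
def NoSinks : Prop := ∀ v : G.V, ∃ e : G.E, G.s e = v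

/-- `G` has no sources: every vertex receives at least one edge. -/
def NoSources : Prop := ∀ v : G.V, ∃ e : G.E, G.r e = v

/-- Every loop in `G` has an exit. -/
def EveryLoopHasExit : Prop :=
  ∀ μ : G.Path, μ.edges ≠ [] → μ.src = μ.rng →
    ∃ e ∈ μ.edges, ∃ f g : G.E, f ≠ g ∧ G.s f = G.s e ∧ G.s g = G.s e

variable (A : Type) [CStarAlgebra A] [PartialOrder A] [StarOrderedRing A]

/-- A Cuntz–Krieger `G`-family in a unital C*-algebra `A`. -/
structure CKFamily where
  P : G.V → A
  S : G.E → A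
  proj_idem : ∀ v, P v * P v = P v
  proj_sa : ∀ v, star (P v) = P v
  orth : ∀ v w, v ≠ w → P v * P w = 0
  ck1 : ∀ e, star (S e) * S e = P (G.r e)
  ck1' : ∀ e f, e ≠ f → star (S e) * S f = 0
  ck2 : ∀ e, S e * star (S e) ≤ P (G.s e)
  ck3 : ∀ v : G.V, (∃ e, G.s e = v) →
    P v = ∑ e ∈ Finset.univ.filter (fun e => G.s e = v), S e * star (S e)

variable {G A}

/-- The partial isometry `S_μ` associated to a finite path, defined from the source. -/
def CKFamily.sFrom (F : CKFamily G A) : G.V → List G.E → A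
  | v, [] => F.P v
  | _, e :: l => F.S e * F.sFrom (G.r e) l

/-- `S_μ` for a path `μ`. -/
def CKFamily.sPath (F : CKFamily G A) (μ : G.Path) : A := F.sFrom μ.src μ.edges

/-- `P_μ = S_μ S_μ*` for a path `μ`. -/
def CKFamily.pPath (F : CKFamily G A) (μ : G.Path) : A :=
  F.sPath μ * star (F.sPath μ)

variable (G A) in
/-- `A`, together with the Cuntz–Krieger family `F`, is the graph C*-algebra `C*(G)`:
the family sums to one, generates `A` as a closed *-subalgebra, and is universal. -/
structure IsGraphCStarAlgebra (F : CKFamily G A) : Prop where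
  sum_one : ∑ v : G.V, F.P v = 1
  generates :
    (StarAlgebra.adjoin ℂ (Set.range F.P ∪ Set.range F.S)).topologicalClosure = ⊤
  universal : ∀ (C : Type) [CStarAlgebra C] [PartialOrder C] [StarOrderedRing C]
    (F' : CKFamily G C), (∑ v : G.V, F'.P v) = 1 →
      ∃! φ : A →⋆ₐ[ℂ] C, (∀ v, φ (F.P v) = F'.P v) ∧ (∀ e, φ (F.S e) = F'.S e)

/-- The diagonal subalgebra `D_E`: the closed *-subalgebra generated by the `P_μ`. -/
def CKFamily.DE (F : CKFamily G A) : StarSubalgebra ℂ A :=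
  (StarAlgebra.adjoin ℂ {a : A | ∃ μ : G.Path, a = F.pPath μ}).topologicalClosure

/-- `D_E^k`: the linear span of the `P_μ`, `μ ∈ E^k`. -/
noncomputable def CKFamily.DEk (F : CKFamily G A) (k : ℕ) : Submodule ℂ A :=
  Submodule.span ℂ {a : A | ∃ μ : G.Path, μ.len = k ∧ a = F.pPath μ}

/-- The core AF-subalgebra `F_E`: closed linear span of words `S_μ S_ν*` with `|μ| = |ν|`. -/
def CKFamily.FE (F : CKFamily G A) : Set A :=
  closure ((Submodule.span ℂ
    {a : A | ∃ μ ν : G.Path, μ.len = ν.len ∧ a = F.sPath μ * star (F.sPath ν)}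
      : Submodule ℂ A) : Set A)

/-- `F_E^k`: the linear span of words `S_μ S_ν*` with `|μ| = |ν| = k`. -/
noncomputable def CKFamily.FEk (F : CKFamily G A) (k : ℕ) : Submodule ℂ A :=
  Submodule.span ℂ
    {a : A | ∃ μ ν : G.Path, μ.len = k ∧ ν.len = k ∧ a = F.sPath μ * star (F.sPath ν)}

/-- `u ∈ U_E` : `u` is a unitary commuting with all vertex projections. -/
def CKFamily.IsUE (F : CKFamily G A) (u : A) : Prop :=
  u ∈ unitary A ∧ ∀ v, u * F.P v = F.P v * u

/-- `lam = λ_u` : the endomorphism determined by the unitary `u ∈ U_E`. -/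
def CKFamily.IsLambdaU (F : CKFamily G A) (u : A) (lam : A →⋆ₐ[ℂ] A) : Prop :=
  (∀ e, lam (F.S e) = u * F.S e) ∧ (∀ v, lam (F.P v) = F.P v)

/-- The shift `φ(x) = Σ_e S_e x S_e*`. -/
def CKFamily.shift (F : CKFamily G A) (x : A) : A :=
  ∑ e : G.E, F.S e * x * star (F.S e)

/-- `u_k = u φ(u) ⋯ φ^{k-1}(u)` (with `u_0 = 1`). -/
def CKFamily.ukProd (F : CKFamily G A) (u : A) : ℕ → A
  | 0 => 1
  | m + 1 => F.ukProd u m * F.shift^[m] u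

/-- An element is a finite sum of words `S_α S_β*`. -/
def CKFamily.IsSumOfWords (F : CKFamily G A) (a : A) : Prop :=
  ∃ (n : ℕ) (μ ν : Fin n → G.Path),
    a = ∑ i, F.sPath (μ i) * star (F.sPath (ν i))

/-- The group `S_E` of unitaries of the form `Σ S_α S_β*`. -/
def CKFamily.SE (F : CKFamily G A) : Set A :=
  {a : A | a ∈ unitary A ∧ F.IsSumOfWords a}

/-- The group `P_E^k` of unitaries of the form `Σ S_α S_β*`, `|α| = |β| = k`. -/
def CKFamily.PEk (F : CKFamily G A) (k : ℕ) : Set A :=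
  {a : A | a ∈ unitary A ∧ ∃ (n : ℕ) (μ ν : Fin n → G.Path),
    (∀ i, (μ i).len = k ∧ (ν i).len = k) ∧
    a = ∑ i, F.sPath (μ i) * star (F.sPath (ν i))}

/-- `P_E = ∪_k P_E^k`. -/
def CKFamily.PE (F : CKFamily G A) : Set A := ⋃ k : ℕ, F.PEk k

/-- `γ_z` on generators: `γ (S e) = z • S e`, `γ (P v) = P v`. -/
def CKFamily.IsGaugeHom (F : CKFamily G A) (z : ℂ) (ρ : A →⋆ₐ[ℂ] A) : Prop :=
  (∀ e, ρ (F.S e) = z • F.S e) ∧ (∀ v, ρ (F.P v) = F.P v)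

/-- `γ_z` as an automorphism, on generators. -/
def CKFamily.IsGaugeAut (F : CKFamily G A) (z : ℂ) (γ : A ≃⋆ₐ[ℂ] A) : Prop :=
  (∀ e, γ (F.S e) = z • F.S e) ∧ (∀ v, γ (F.P v) = F.P v)

/-- The automorphism `α` of `C*(E)` is induced by an automorphism of the graph `E`. -/
def CKFamily.IsGraphInduced (F : CKFamily G A) (α : A ≃⋆ₐ[ℂ] A) : Prop :=
  ∃ (φV : G.V ≃ G.V) (φE : G.E ≃ G.E),
    (∀ e, G.s (φE e) = φV (G.s e)) ∧ (∀ e, G.r (φE e) = φV (G.r e)) ∧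
    (∀ e, α (F.S e) = F.S (φE e)) ∧ (∀ v, α (F.P v) = F.P (φV v))

/-- Membership in the subgroup `𝔊_E` of `Aut (C*(E))` generated by the graph
automorphisms `Γ_E` together with the automorphisms `λ_u`, `u ∈ S_E ∩ U_E`. -/
inductive CKFamily.InGG (F : CKFamily G A) : (A ≃⋆ₐ[ℂ] A) → Prop
  | gamma (α : A ≃⋆ₐ[ℂ] A) : F.IsGraphInduced α → F.InGG α
  | lam (α : A ≃⋆ₐ[ℂ] A) (u : A) : u ∈ F.SE → F.IsUE u →
      (∀ e, α (F.S e) = u * F.S e) → (∀ v, α (F.P v) = F.P v) → F.InGG α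
  | one : F.InGG (StarAlgEquiv.refl ℂ A)
  | mul (α β : A ≃⋆ₐ[ℂ] A) : F.InGG α → F.InGG β → F.InGG (α.trans β)
  | inv (α : A ≃⋆ₐ[ℂ] A) : F.InGG α → F.InGG α.symm

/-- Membership in the subgroup `𝔊ℜ_E` of `Aut (C*(E))` generated by the graph
automorphisms `Γ_E` together with the automorphisms `λ_u`, `u ∈ P_E ∩ U_E`. -/
inductive CKFamily.InGGR (F : CKFamily G A) : (A ≃⋆ₐ[ℂ] A) → Prop
  | gamma (α : A ≃⋆ₐ[ℂ] A) : F.IsGraphInduced α → F.InGGR α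
  | lam (α : A ≃⋆ₐ[ℂ] A) (u : A) : u ∈ F.PE → F.IsUE u →
      (∀ e, α (F.S e) = u * F.S e) → (∀ v, α (F.P v) = F.P v) → F.InGGR α
  | one : F.InGGR (StarAlgEquiv.refl ℂ A)
  | mul (α β : A ≃⋆ₐ[ℂ] A) : F.InGGR α → F.InGGR β → F.InGGR (α.trans β)
  | inv (α : A ≃⋆ₐ[ℂ] A) : F.InGGR α → F.InGGR α.symm


/-- The map `a^u_{e,f}(x) = S_e* u* x u S_f`. -/
def CKFamily.amap (F : CKFamily G A) (u : A) (e f : G.E) (x : A) : A :=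
  star (F.S e) * (star u * x * u) * F.S f

/-- Composition of the maps `a^u_{e,f}` along a list of pairs of edges. -/
def CKFamily.acomp (F : CKFamily G A) (u : A) : List (G.E × G.E) → A → A
  | [], x => x
  | p :: t, x => F.amap u p.1 p.2 (F.acomp u t x)

/-- The spaces `Ξ_r`: `Ξ_0 = F_E^{k-1}`, `Ξ_r = λ_u(H)* Ξ_{r-1} λ_u(H)`. -/
noncomputable def CKFamily.Xi (F : CKFamily G A) (u : A) (k : ℕ) : ℕ → Submodule ℂ A
  | 0 => F.FEk (k - 1)
  | r + 1 => Submodule.span ℂ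
      {a : A | ∃ x ∈ F.Xi u k r, ∃ e f : G.E, a = star (u * F.S e) * x * (u * F.S f)}

/-- The spaces `Ξ_r^D`: `Ξ_0^D = D_E^{k-1}`, `Ξ_r^D = λ_u(H)* Ξ_{r-1}^D λ_u(H)`. -/
noncomputable def CKFamily.XiD (F : CKFamily G A) (u : A) (k : ℕ) : ℕ → Submodule ℂ A
  | 0 => F.DEk (k - 1)
  | r + 1 => Submodule.span ℂ
      {a : A | ∃ x ∈ F.XiD u k r, ∃ e f : G.E, a = star (u * F.S e) * x * (u * F.S f)}

end FinDirGraph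

open Set TopologicalSpace
open scoped CStarAlgebra

theorem IsIdempotentElem.eq_of_commute_of_norm_sub_lt_one {R : Type*} [NonUnitalNormedRing R]
    {p q : R} (hp : IsIdempotentElem p) (hq : IsIdempotentElem q) (hpq : Commute p q)
    (hlt : ‖p - q‖ < 1) : p = q := by
  have hcube : (p - q) * (p - q) * (p - q) = p - q := by
    have hqp : q * p = p * q := hpq.eq.symm
    have hpqq : p * q * q = p * q := by rw [mul_assoc, hq.eq]
    have hpqp : p * q * p = p * q := by rw [mul_assoc, hqp, ← mul_assoc, hp.eq]
    simp only [sub_mul, mul_sub, hp.eq, hq.eq, hqp, hpqq, hpqp]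
    abel
  have hle : ‖p - q‖ ≤ ‖p - q‖ * ‖p - q‖ * ‖p - q‖ :=
    calc ‖p - q‖ = ‖(p - q) * (p - q) * (p - q)‖ := by rw [hcube]
      _ ≤ ‖p - q‖ * ‖p - q‖ * ‖p - q‖ := norm_mul₃_le
  have hzero : ‖p - q‖ = 0 := by nlinarith [norm_nonneg (p - q)]
  rwa [norm_eq_zero, sub_eq_zero] at hzero

theorem norm_le_one_of_isStarProjection_star_mul_self {E : Type*} [NonUnitalNormedRing E]
    [StarRing E] [CStarRing E] {x : E} (hx : IsStarProjection (star x * x)) : ‖x‖ ≤ 1 := by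
  have h := hx.norm_le
  rw [CStarRing.norm_star_mul_self] at h
  nlinarith [norm_nonneg x]

theorem dist_mul_mul_star_le {R : Type*} [NonUnitalNormedRing R] [StarRing R]
    [NormedStarGroup R] {a b m : R} (ha : ‖a‖ ≤ 1) (hb : ‖b‖ ≤ 1) (hm : ‖m‖ ≤ 1) :
    dist (a * m * star a) (b * m * star b) ≤ 2 * dist a b := by
  rw [dist_eq_norm, dist_eq_norm]
  have hsplit : a * m * star a - b * m * star b = (a - b) * m * star a + b * m * star (a - b) := by
    rw [star_sub]; noncomm_ring
  calc ‖a * m * star a - b * m * star b‖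
      ≤ ‖a - b‖ * ‖m‖ * ‖star a‖ + ‖b‖ * ‖m‖ * ‖star (a - b)‖ :=
        hsplit ▸ (norm_add_le _ _).trans (add_le_add norm_mul₃_le norm_mul₃_le)
    _ ≤ ‖a - b‖ * 1 * 1 + 1 * 1 * ‖a - b‖ := by rw [norm_star, norm_star]; gcongr
    _ = 2 * ‖a - b‖ := by ring

theorem Set.Countable.submonoidClosure {M : Type*} [Monoid M] {s : Set M} (hs : s.Countable) :
    (Submonoid.closure s : Set M).Countable := by
  have := hs.to_subtype
  rw [Submonoid.closure_eq_image_prod]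
  refine ((countable_range fun l : List s ↦ l.map (↑)).mono fun l hl ↦ ?_).image _
  lift l to List s using hl
  exact ⟨l, rfl⟩

theorem StarAlgebra.isSeparable_topologicalClosure_adjoin {R A : Type*} [CommSemiring R]
    [StarRing R] [TopologicalSpace R] [SeparableSpace R] [TopologicalSpace A] [Semiring A]
    [StarRing A] [Algebra R A] [StarModule R A] [IsTopologicalSemiring A] [ContinuousStar A]
    [ContinuousSMul R A] {s : Set A} (hs : s.Countable) :
    IsSeparable ((adjoin R s).topologicalClosure : Set A) := by
  rw [StarSubalgebra.topologicalClosure_coe]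
  refine IsSeparable.closure ?_
  change IsSeparable (Subalgebra.toSubmodule (adjoin R s).toSubalgebra : Set A)
  rw [adjoin_eq_span]
  exact (hs.union (hs.preimage star_injective)).submonoidClosure.isSeparable.span

theorem StarSubalgebra.commute_of_mem_topologicalClosure_adjoin {R A : Type*} [CommSemiring R]
    [StarRing R] [TopologicalSpace A] [Semiring A] [StarRing A] [Algebra R A] [StarModule R A]
    [IsTopologicalSemiring A] [ContinuousStar A] [T2Space A] {s : Set A}
    (hcomm : ∀ x ∈ s, ∀ y ∈ s, x * y = y * x)
    (hcomm_star : ∀ x ∈ s, ∀ y ∈ s, x * star y = star y * x) {x y : A}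
    (hx : x ∈ (StarAlgebra.adjoin R s).topologicalClosure)
    (hy : y ∈ (StarAlgebra.adjoin R s).topologicalClosure) : Commute x y := by
  have hx' := topologicalClosure_adjoin_le_centralizer_centralizer R s hx
  have hy' := topologicalClosure_adjoin_le_centralizer_centralizer R s hy
  rw [← SetLike.mem_coe, coe_centralizer_centralizer] at hx' hy'
  exact Set.centralizer_centralizer_comm_of_comm
    (fun a ha b hb ↦ (Set.union_star_self_comm (fun a ha b hb ↦ hcomm b hb a ha)
      (fun a ha b hb ↦ hcomm_star b hb a ha) a ha b hb).symm) _ hx' _ hy'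

theorem exists_countable_subset_forall_exists_dist_lt {M Y : Type*} [PseudoMetricSpace Y]
    [SeparableSpace Y] (c : M → Y) (s : Set M) {ε : ℝ} (hε : 0 < ε) :
    ∃ R ⊆ s, R.Countable ∧ ∀ m ∈ s, ∃ m' ∈ R, dist (c m) (c m') < ε := by
  obtain ⟨t, hts, htc, hst⟩ :=
    (IsSeparable.of_separableSpace (c '' s)).exists_countable_dense_subset
  choose σ hσs hσc using hts
  have := htc.to_subtype
  refine ⟨range fun y : t ↦ σ y.2, range_subset_iff.2 fun y ↦ hσs y.2, countable_range _,
    fun m hm ↦ ?_⟩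
  obtain ⟨y, hyt, hy⟩ := Metric.mem_closure_iff.1 (hst (mem_image_of_mem c hm)) ε hε
  exact ⟨σ hyt, ⟨⟨y, hyt⟩, rfl⟩, (hσc hyt).symm ▸ hy⟩

namespace FinDirGraph.CKFamily

variable {G : FinDirGraph} {A : Type} [CStarAlgebra A] [PartialOrder A] (F : CKFamily G A)

theorem isStarProjection_P (v : G.V) : IsStarProjection (F.P v) :=
  ⟨F.proj_idem v, F.proj_sa v⟩

def pFrom (v : G.V) (l : List G.E) : A := F.sFrom v l * star (F.sFrom v l)

theorem pFrom_nil (v : G.V) : F.pFrom v [] = F.P v := by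
  rw [pFrom, sFrom, F.proj_sa, F.proj_idem]

theorem pFrom_cons (v : G.V) (e : G.E) (l : List G.E) :
    F.pFrom v (e :: l) = F.S e * F.pFrom (G.r e) l * star (F.S e) := by
  simp only [pFrom, sFrom, star_mul, mul_assoc]

theorem S_conj_mul_S_conj (e : G.E) (X : A) {Y : A} (hY : F.P (G.r e) * Y = Y) :
    F.S e * X * star (F.S e) * (F.S e * Y * star (F.S e)) = F.S e * (X * Y) * star (F.S e) := by
  simp only [mul_assoc]
  rw [← mul_assoc (star (F.S e)), F.ck1, ← mul_assoc (F.P _), hY]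

theorem S_conj_mul_S_conj_of_ne {e f : G.E} (hef : e ≠ f) (X Y : A) :
    F.S e * X * star (F.S e) * (F.S f * Y * star (F.S f)) = 0 := by
  simp only [mul_assoc]
  rw [← mul_assoc (star (F.S e)), F.ck1' e f hef, zero_mul, mul_zero, mul_zero]

theorem pPath_mem_DE (μ : G.Path) : F.pPath μ ∈ F.DE :=
  StarSubalgebra.le_topologicalClosure _ (StarAlgebra.subset_adjoin ℂ _ ⟨μ, rfl⟩)

theorem P_mem_DE (v : G.V) : F.P v ∈ F.DE :=
  F.pFrom_nil v ▸ F.pPath_mem_DE ⟨v, [], trivial⟩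

variable [StarOrderedRing A]

theorem P_mul_S (e : G.E) : F.P (G.s e) * F.S e = F.S e := by
  set P := F.P (G.s e)
  have hPsa : star P = P := F.proj_sa _
  have hPi : P * P = P := F.proj_idem _
  have hle : (1 - P) * F.S e * star ((1 - P) * F.S e) ≤ 0 :=
    calc (1 - P) * F.S e * star ((1 - P) * F.S e)
        = star (1 - P) * (F.S e * star (F.S e)) * (1 - P) := by
          simp only [star_mul, star_sub, star_one, hPsa, mul_assoc]
      _ ≤ star (1 - P) * P * (1 - P) := star_left_conjugate_le_conjugate (F.ck2 e) _
      _ = 0 := by simp only [star_sub, star_one, hPsa, sub_mul, one_mul, hPi, sub_self, zero_mul]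
  have h0 := (CStarRing.mul_star_self_eq_zero_iff _).1 (le_antisymm hle (mul_star_self_nonneg _))
  rwa [sub_mul, one_mul, sub_eq_zero, eq_comm] at h0

theorem P_mul_sFrom : ∀ {v : G.V} {l : List G.E}, G.IsPathFrom v l →
    F.P v * F.sFrom v l = F.sFrom v l
  | v, [], _ => F.proj_idem v
  | _, e :: _, ⟨hse, _⟩ => by rw [sFrom, ← mul_assoc, ← hse, P_mul_S]

theorem P_mul_pFrom {v : G.V} {l : List G.E} (hl : G.IsPathFrom v l) :
    F.P v * F.pFrom v l = F.pFrom v l := by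
  rw [pFrom, ← mul_assoc, F.P_mul_sFrom hl]

theorem pFrom_mul_P {v : G.V} {l : List G.E} (hl : G.IsPathFrom v l) :
    F.pFrom v l * F.P v = F.pFrom v l := by
  simpa only [pFrom, star_mul, star_star, F.proj_sa, mul_assoc] using
    congrArg star (F.P_mul_pFrom hl)

theorem isStarProjection_pFrom : ∀ {v : G.V} {l : List G.E}, G.IsPathFrom v l →
    IsStarProjection (F.pFrom v l)
  | v, [], _ => F.pFrom_nil v ▸ F.isStarProjection_P v
  | v, e :: l, ⟨_, hl⟩ => by
    refine ⟨?_, .mul_star_self _⟩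
    rw [IsIdempotentElem, pFrom_cons, F.S_conj_mul_S_conj e _ (F.P_mul_pFrom hl),
      (isStarProjection_pFrom hl).isIdempotentElem.eq]

theorem commute_P_pFrom (u : G.V) {v : G.V} {l : List G.E} (hl : G.IsPathFrom v l) :
    Commute (F.P u) (F.pFrom v l) := by
  by_cases huv : u = v
  · subst huv
    exact (F.P_mul_pFrom hl).trans (F.pFrom_mul_P hl).symm
  · calc F.P u * F.pFrom v l = F.P u * F.P v * F.pFrom v l := by rw [mul_assoc, F.P_mul_pFrom hl]
      _ = 0 := by rw [F.orth u v huv, zero_mul]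
      _ = F.pFrom v l * (F.P v * F.P u) := by rw [F.orth v u (Ne.symm huv), mul_zero]
      _ = F.pFrom v l * F.P u := by rw [← mul_assoc, F.pFrom_mul_P hl]

theorem commute_pFrom : ∀ {v w : G.V} {l m : List G.E}, G.IsPathFrom v l → G.IsPathFrom w m →
    Commute (F.pFrom v l) (F.pFrom w m)
  | v, _, [], _, _, hm => F.pFrom_nil v ▸ F.commute_P_pFrom v hm
  | _, w, _ :: _, [], hl, _ => F.pFrom_nil w ▸ (F.commute_P_pFrom w hl).symm
  | _, _, e :: _, f :: _, ⟨_, hl⟩, ⟨_, hm⟩ => by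
    rw [pFrom_cons, pFrom_cons]
    by_cases hef : e = f
    · subst hef
      rw [Commute, SemiconjBy, F.S_conj_mul_S_conj e _ (F.P_mul_pFrom hm),
        F.S_conj_mul_S_conj e _ (F.P_mul_pFrom hl), (commute_pFrom hl hm).eq]
    · rw [Commute, SemiconjBy, F.S_conj_mul_S_conj_of_ne hef,
        F.S_conj_mul_S_conj_of_ne (Ne.symm hef)]

theorem commute_of_mem_DE {x y : A} (hx : x ∈ F.DE) (hy : y ∈ F.DE) : Commute x y := by
  set gens := {a : A | ∃ μ : G.Path, a = F.pPath μ}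
  have hcomm : ∀ a ∈ gens, ∀ b ∈ gens, a * b = b * a := by
    rintro _ ⟨μ, rfl⟩ _ ⟨ν, rfl⟩
    exact F.commute_pFrom μ.ok ν.ok
  refine StarSubalgebra.commute_of_mem_topologicalClosure_adjoin hcomm ?_ hx hy
  rintro a ha _ ⟨ν, rfl⟩
  have hν : star (F.pPath ν) = F.pPath ν := (IsSelfAdjoint.mul_star_self _).star_eq
  rw [hν]
  exact hcomm a ha _ ⟨ν, rfl⟩

theorem eq_of_isStarProjection_of_dist_lt_one {p q : A} (hp : IsStarProjection p)
    (hq : IsStarProjection q) (hpD : p ∈ F.DE) (hqD : q ∈ F.DE) (hpq : dist p q < 1) : p = q :=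
  hp.isIdempotentElem.eq_of_commute_of_norm_sub_lt_one hq.isIdempotentElem
    (F.commute_of_mem_DE hpD hqD) (dist_eq_norm p q ▸ hpq)

theorem eqOn_DE_of_dist_lt {Φ : Type*} [FunLike Φ A A] [AlgHomClass Φ ℂ A A]
    [StarHomClass Φ A A] {α β : Φ} (hα : MapsTo α F.DE F.DE) (hβ : MapsTo β F.DE F.DE)
    (hS : ∀ e, dist (α (F.S e)) (β (F.S e)) < 1 / 2)
    (hP : ∀ v, dist (α (F.P v)) (β (F.P v)) < 1) :
    EqOn α β F.DE := by
  have hnorm_S : ∀ (φ : Φ) e, ‖φ (F.S e)‖ ≤ 1 := fun φ e ↦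
    norm_le_one_of_isStarProjection_star_mul_self <| by
      rw [← map_star, ← map_mul, F.ck1]
      exact (F.isStarProjection_P _).map φ
  have hpFrom : ∀ {v l}, G.IsPathFrom v l → α (F.pFrom v l) = β (F.pFrom v l) := by
    intro v l hl
    induction l generalizing v with
    | nil =>
      rw [pFrom_nil]
      exact F.eq_of_isStarProjection_of_dist_lt_one ((F.isStarProjection_P v).map α)
        ((F.isStarProjection_P v).map β) (hα (F.P_mem_DE v)) (hβ (F.P_mem_DE v)) (hP v)
    | cons e l ih =>
      have hpD : F.pFrom v (e :: l) ∈ F.DE := F.pPath_mem_DE ⟨v, e :: l, hl⟩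
      refine F.eq_of_isStarProjection_of_dist_lt_one ((F.isStarProjection_pFrom hl).map α)
        ((F.isStarProjection_pFrom hl).map β) (hα hpD) (hβ hpD) ?_
      obtain ⟨-, hl⟩ := hl
      simp only [pFrom_cons, map_mul, map_star, ih hl]
      calc _ ≤ 2 * dist (α (F.S e)) (β (F.S e)) :=
            dist_mul_mul_star_le (hnorm_S α e) (hnorm_S β e)
              ((F.isStarProjection_pFrom hl).map β).norm_le
        _ < 1 := by linarith [hS e]
  have hle : F.DE ≤ StarAlgHom.equalizer α β :=
    StarSubalgebra.topologicalClosure_minimal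
      (StarAlgHom.adjoin_le_equalizer α β (by rintro _ ⟨μ, rfl⟩; exact hpFrom μ.ok))
      (isClosed_eq (map_continuous α) (map_continuous β))
  exact fun x hx ↦ hle hx

end FinDirGraph.CKFamily

open FinDirGraph in
/-- Proposition 3.5 (countableweyl). -/
theorem stmt_3 (G : FinDirGraph)
    (A : Type) [CStarAlgebra A] [PartialOrder A] [StarOrderedRing A]
    (F : CKFamily G A) (hGA : IsGraphCStarAlgebra G A F) :
    -- Aut_{D_E}(C*(E)) is contained in Aut(C*(E), D_E)
    (∀ β : A ≃⋆ₐ[ℂ] A, (∀ x ∈ F.DE, β x = x) → ⇑β '' (F.DE : Set A) = (F.DE : Set A)) ∧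
    -- Aut_{D_E}(C*(E)) is normal in Aut(C*(E), D_E)
    (∀ α β : A ≃⋆ₐ[ℂ] A, ⇑α '' (F.DE : Set A) = (F.DE : Set A) →
      (∀ x ∈ F.DE, β x = x) → ∀ x ∈ F.DE, α (β (α.symm x)) = x) ∧
    -- the quotient Aut(C*(E), D_E)/Aut_{D_E}(C*(E)) is countable: there is a countable
    -- family of coset representatives (α, β lie in the same coset iff they agree on D_E)
    (∃ R : Set (A ≃⋆ₐ[ℂ] A), R.Countable ∧
      ∀ α : A ≃⋆ₐ[ℂ] A, ⇑α '' (F.DE : Set A) = (F.DE : Set A) →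
        ∃ β ∈ R, ⇑β '' (F.DE : Set A) = (F.DE : Set A) ∧ ∀ x ∈ F.DE, α x = β x) := by
  refine ⟨fun β hβ ↦ EqOn.image_eq_self hβ, fun α β hα hβ x hx ↦ ?_, ?_⟩
  · obtain ⟨y, hy, rfl⟩ : x ∈ ⇑α '' F.DE := hα.symm ▸ hx
    rw [StarAlgEquiv.symm_apply_apply, hβ y hy]
  · have : SeparableSpace A := by
      have h := StarAlgebra.isSeparable_topologicalClosure_adjoin (R := ℂ)
        ((countable_range F.P).union (countable_range F.S))
      rw [hGA.generates, StarSubalgebra.coe_top] at h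
      exact isSeparable_univ_iff.1 h
    obtain ⟨R, hRs, hRc, hR⟩ := exists_countable_subset_forall_exists_dist_lt
      (fun (α : A ≃⋆ₐ[ℂ] A) (i : G.E ⊕ G.V) ↦ α (Sum.elim F.S F.P i))
      {α | ⇑α '' F.DE = F.DE} one_half_pos
    refine ⟨R, hRc, fun α hα ↦ ?_⟩
    obtain ⟨β, hβR, hαβ⟩ := hR α hα
    have hβ : ⇑β '' F.DE = F.DE := hRs hβR
    refine ⟨β, hβR, hβ, F.eqOn_DE_of_dist_lt ((mapsTo_image _ _).mono_right hα.subset)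
      ((mapsTo_image _ _).mono_right hβ.subset) (fun e ↦ ?_) (fun v ↦ ?_)⟩
    · exact (dist_le_pi_dist _ _ (Sum.inl e)).trans_lt hαβ
    · exact ((dist_le_pi_dist _ _ (Sum.inr v)).trans_lt hαβ).trans one_half_lt_one
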